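/- arXiv:2012.07837 — 4 statements merged into one kernel-verified Lean document; each statement's English description precedes it below -/
import Mathlib

section
/- Let M > 0 and let f = h + conj(g) belong to the class P⁰_H(M), with power series h(z) = z + Σ_{n=2}^∞ a_n zⁿ and g(z) = Σ_{n=2}^∞ b_n zⁿ. Then for every integer n ≥ 2 one has |a_n| + |b_n| ≤ 2M/(n(n−1)). -/
open Filter MeasureTheory

/-- Euclidean distance from `f 0` to the boundary of `f(𝔻)`, defined as
`liminf_{|z| → 1⁻} |f z - f 0|`. -/
noncomputable def bdyDist (f : ℂ → ℂ) : ℝ :=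
  Filter.liminf (fun z : ℂ => ‖f z - f 0‖)
    (Filter.comap (fun z : ℂ => ‖z‖) (nhdsWithin 1 (Set.Iio 1)))

/-- `f = h + conj g` belongs to the class `P⁰_H(M)`:  `h z = z + ∑_{n≥2} a n * z^n`,
`g z = ∑_{n≥2} b n * z^n` on the unit disk, and `Re (z h''(z)) > -M + |z g''(z)|` there. -/
def PH0 (M : ℝ) (a b : ℕ → ℂ) (h g : ℂ → ℂ) : Prop :=
  (∀ z ∈ Metric.ball (0 : ℂ) 1,
      HasSum (fun n : ℕ => a (n + 2) * z ^ (n + 2)) (h z - z)) ∧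
  (∀ z ∈ Metric.ball (0 : ℂ) 1,
      HasSum (fun n : ℕ => b (n + 2) * z ^ (n + 2)) (g z)) ∧
  (∀ z ∈ Metric.ball (0 : ℂ) 1,
      -M + ‖z * deriv (deriv g) z‖ < (z * deriv (deriv h) z).re)

/-!
For a unimodular `ν`, the function `p = M + z h'' + ν z g''` has nonnegative real part on the
disk, because `Re (ν z g'') ≥ -|z g''|`; its constant term is `M` and its coefficient of
`z ^ (n - 1)` is `n (n - 1) (a_n + ν b_n)`. Carathéodory's inequality `|c_k| ≤ 2 Re c_0` holds
for such `p`: on the circle `|z| = r < 1` the integral of `2 Re p(r e^{iθ}) e^{-ikθ}` is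
`2π c_k r^k`, and its modulus is at most `∫ 2 Re p(r e^{iθ}) dθ = 4π Re c_0`; then let `r → 1`.
Choosing `ν` so that `ν b_n` points in the direction of `a_n` gives `|a_n| + |b_n|`.
-/

open Complex Real Topology FormalMultilinearSeries
open scoped ENNReal

noncomputable def fourierMode (m : ℤ) (θ : ℝ) : ℂ := cexp (m * I * θ)

@[simp]
lemma norm_fourierMode (m : ℤ) (θ : ℝ) : ‖fourierMode m θ‖ = 1 := by
  simp [fourierMode, norm_exp]

@[fun_prop]
lemma continuous_fourierMode (m : ℤ) : Continuous (fourierMode m) := by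
  unfold fourierMode; fun_prop

@[simp]
lemma fourierMode_zero (θ : ℝ) : fourierMode 0 θ = 1 := by
  simp [fourierMode]

lemma fourierMode_add (j m : ℤ) (θ : ℝ) :
    fourierMode (j + m) θ = fourierMode j θ * fourierMode m θ := by
  simp only [fourierMode, ← Complex.exp_add]; push_cast; ring_nf

lemma fourierMode_one_pow (j : ℕ) (θ : ℝ) : fourierMode 1 θ ^ j = fourierMode j θ := by
  simp [fourierMode, ← Complex.exp_nat_mul, mul_assoc]

lemma conj_fourierMode (m : ℤ) (θ : ℝ) : starRingEnd ℂ (fourierMode m θ) = fourierMode (-m) θ := by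
  simp [fourierMode, ← Complex.exp_conj]

lemma integral_fourierMode (m : ℤ) :
    ∫ θ in (0)..2 * π, fourierMode m θ = if m = 0 then (2 * π : ℂ) else 0 := by
  split_ifs with hm
  · simp [fourierMode, hm]
  · have hmI : (m : ℂ) * I ≠ 0 := by simp [hm]
    have hperiod : cexp (m * I * (2 * π)) = 1 := by
      rw [show (m : ℂ) * I * (2 * π) = m * (2 * π * I) by ring, exp_int_mul_two_pi_mul_I]
    simp [fourierMode, integral_exp_mul_complex hmI, hperiod]

section TrigonometricSeries

variable {u : ℕ → ℂ}

lemma continuous_tsum_mul_fourierMode (hu : Summable (‖u ·‖)) :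
    Continuous fun θ => ∑' j : ℕ, u j * fourierMode j θ :=
  continuous_tsum (fun j => by fun_prop) hu fun j θ => by simp

lemma integral_tsum_mul_fourierMode (hu : Summable (‖u ·‖)) (m : ℤ) :
    ∫ θ in (0)..2 * π, (∑' j : ℕ, u j * fourierMode j θ) * fourierMode m θ
      = 2 * π * ∑' j : ℕ, if (j : ℤ) + m = 0 then u j else 0 := by
  have hsum : HasSum (fun j : ℕ => ∫ θ in (0)..2 * π, u j * fourierMode j θ * fourierMode m θ)
      (∫ θ in (0)..2 * π, (∑' j : ℕ, u j * fourierMode j θ) * fourierMode m θ) := by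
    refine intervalIntegral.hasSum_integral_of_dominated_convergence (fun j _ => ‖u j‖)
      (fun j => by fun_prop) (fun j => ae_of_all _ fun θ _ => by simp)
      (ae_of_all _ fun _ _ => hu) intervalIntegrable_const (ae_of_all _ fun θ _ => ?_)
    have : Summable fun j : ℕ => u j * fourierMode j θ := hu.of_norm_bounded fun j => by simp
    exact this.hasSum.mul_right _
  rw [← hsum.tsum_eq, ← tsum_mul_left]
  congr 1 with j
  simp only [mul_assoc, ← fourierMode_add, intervalIntegral.integral_const_mul,
    integral_fourierMode]
  split_ifs <;> ring

lemma integral_tsum_mul_fourierMode_neg (hu : Summable (‖u ·‖)) (k : ℕ) :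
    ∫ θ in (0)..2 * π, (∑' j : ℕ, u j * fourierMode j θ) * fourierMode (-k) θ = 2 * π * u k := by
  rw [integral_tsum_mul_fourierMode hu, tsum_eq_single k fun j hj => if_neg (by omega),
    if_pos (by omega)]

lemma integral_tsum_mul_fourierMode_of_ne_zero (hu : Summable (‖u ·‖)) {k : ℕ} (hk : k ≠ 0) :
    ∫ θ in (0)..2 * π, (∑' j : ℕ, u j * fourierMode j θ) * fourierMode k θ = 0 := by
  have hne : ∀ j : ℕ, (j : ℤ) + k ≠ 0 := by omega
  simp [integral_tsum_mul_fourierMode hu, hne]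

lemma integral_re_tsum_mul_fourierMode (hu : Summable (‖u ·‖)) :
    ∫ θ in (0)..2 * π, (∑' j : ℕ, u j * fourierMode j θ).re = 2 * π * (u 0).re := by
  have h0 := integral_tsum_mul_fourierMode_neg hu 0
  simp only [Nat.cast_zero, neg_zero, fourierMode_zero, mul_one] at h0
  have hre := intervalIntegral.intervalIntegral_re
    ((continuous_tsum_mul_fourierMode hu).intervalIntegrable (μ := volume) 0 (2 * π))
  simp only [RCLike.re_to_complex] at hre
  rw [hre, h0]
  simp

lemma integral_two_mul_re_tsum_mul_fourierMode_neg (hu : Summable (‖u ·‖)) {k : ℕ} (hk : k ≠ 0) :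
    ∫ θ in (0)..2 * π, ((2 * (∑' j : ℕ, u j * fourierMode j θ).re : ℝ) : ℂ) * fourierMode (-k) θ
      = 2 * π * u k := by
  set φ := fun θ => ∑' j : ℕ, u j * fourierMode j θ
  have hφ : Continuous φ := continuous_tsum_mul_fourierMode hu
  change ∫ θ in (0)..2 * π, ((2 * (φ θ).re : ℝ) : ℂ) * fourierMode (-k) θ = _
  have hpt : ∀ θ, ((2 * (φ θ).re : ℝ) : ℂ) * fourierMode (-k) θ
      = φ θ * fourierMode (-k) θ + starRingEnd ℂ (φ θ * fourierMode k θ) := by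
    intro θ; rw [map_mul, conj_fourierMode, ← add_mul, Complex.add_conj]
  have hconj : ∫ θ in (0)..2 * π, starRingEnd ℂ (φ θ * fourierMode k θ) = 0 := by
    rw [intervalIntegral.intervalIntegral_conj, integral_tsum_mul_fourierMode_of_ne_zero hu hk,
      map_zero]
  simp_rw [hpt]
  rw [intervalIntegral.integral_add ((by fun_prop : Continuous _).intervalIntegrable _ _)
    ((by fun_prop : Continuous _).intervalIntegrable _ _), hconj, add_zero]
  exact integral_tsum_mul_fourierMode_neg hu k

theorem norm_le_two_mul_re_of_re_tsum_nonneg (hu : Summable (‖u ·‖))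
    (hre : ∀ θ : ℝ, 0 ≤ (∑' j : ℕ, u j * fourierMode j θ).re) {k : ℕ} (hk : k ≠ 0) :
    ‖u k‖ ≤ 2 * (u 0).re := by
  set φ := fun θ => ∑' j : ℕ, u j * fourierMode j θ
  have h2π : 0 < 2 * π := by positivity
  have : 2 * π * ‖u k‖ ≤ 2 * π * (2 * (u 0).re) := calc
    2 * π * ‖u k‖ = ‖∫ θ in (0)..2 * π, ((2 * (φ θ).re : ℝ) : ℂ) * fourierMode (-k) θ‖ := by
      rw [integral_two_mul_re_tsum_mul_fourierMode_neg hu hk, norm_mul]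
      simp [abs_of_pos pi_pos]
    _ ≤ ∫ θ in (0)..2 * π, ‖((2 * (φ θ).re : ℝ) : ℂ) * fourierMode (-k) θ‖ :=
      intervalIntegral.norm_integral_le_integral_norm h2π.le
    _ = ∫ θ in (0)..2 * π, 2 * (φ θ).re := by
      congr 1 with θ
      rw [norm_mul, norm_fourierMode, mul_one, Complex.norm_real, Real.norm_of_nonneg]
      have := hre θ; positivity
    _ = 2 * π * (2 * (u 0).re) := by
      rw [intervalIntegral.integral_const_mul, integral_re_tsum_mul_fourierMode hu]; ring
  exact le_of_mul_le_mul_left this h2π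

end TrigonometricSeries

section PowerSeries

variable {c : ℕ → ℂ} {f : ℂ → ℂ}

lemma hasFPowerSeriesOnBall_ofScalars_of_hasSum {r : ℝ≥0∞} (hr : 0 < r)
    (hf : ∀ z ∈ Metric.eball (0 : ℂ) r, HasSum (fun n => c n * z ^ n) (f z)) :
    HasFPowerSeriesOnBall f (ofScalars ℂ c) 0 r where
  r_le := by
    refine ENNReal.le_of_forall_nnreal_lt fun ρ hρ =>
      (ofScalars ℂ c).le_radius_of_tendsto (l := 0) ?_
    have hρ' : (ρ : ℂ) ∈ Metric.eball (0 : ℂ) r := by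
      rwa [Metric.mem_eball, edist_zero_right, ← enorm_norm, Complex.norm_real, Real.norm_eq_abs,
        NNReal.abs_eq, NNReal.enorm_eq]
    simpa [ofScalars_norm] using (hf _ hρ').summable.tendsto_atTop_zero.norm
  r_pos := hr
  hasSum {z} hz := by simpa [ofScalars_apply_eq, mul_comm] using hf z hz

lemma hasSum_deriv_of_hasSum {r : ℝ}
    (hf : ∀ z ∈ Metric.ball (0 : ℂ) r, HasSum (fun n => c n * z ^ n) (f z)) :
    ∀ z ∈ Metric.ball (0 : ℂ) r, HasSum (fun n => (n + 1) * c (n + 1) * z ^ n) (deriv f z) := by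
  intro z hz
  have hr : 0 < r := (norm_nonneg z).trans_lt (by simpa using hz)
  rw [← Metric.eball_ofReal] at hf hz
  have hp := (hasFPowerSeriesOnBall_ofScalars_of_hasSum (ENNReal.ofReal_pos.mpr hr) hf).fderiv
  have := (hp.hasSum hz).mapL (ContinuousLinearMap.apply ℂ ℂ (1 : ℂ))
  simpa [apply_eq_pow_smul_coeff, coeff_ofScalars, mul_comm, mul_left_comm] using this

lemma hasSum_mul_deriv_deriv_of_hasSum_add_two {r : ℝ} (α β : ℂ)
    (hf : ∀ z ∈ Metric.ball (0 : ℂ) r,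
      HasSum (fun n => c (n + 2) * z ^ (n + 2)) (f z - (α + β * z))) :
    ∀ z ∈ Metric.ball (0 : ℂ) r,
      HasSum (fun n => n * (n + 1) * c (n + 1) * z ^ n) (z * deriv (deriv f) z) := by
  set e := Function.update (Function.update c 0 α) 1 β
  have he : ∀ z ∈ Metric.ball (0 : ℂ) r, HasSum (fun n => e n * z ^ n) (f z) := by
    intro z hz
    rw [← hasSum_nat_add_iff' 2]
    simpa [e, Finset.sum_range_succ] using hf z hz
  intro z hz
  rw [← hasSum_nat_add_iff' 1]
  simpa [e, mul_pow, pow_succ, mul_assoc, mul_comm, mul_left_comm, add_assoc, one_add_one_eq_two]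
    using (hasSum_deriv_of_hasSum (hasSum_deriv_of_hasSum he) z hz).mul_left z

theorem norm_coeff_le_two_mul_re_of_re_nonneg {p : ℂ → ℂ}
    (hp : ∀ z ∈ Metric.ball (0 : ℂ) 1, HasSum (fun n => c n * z ^ n) (p z))
    (hre : ∀ z ∈ Metric.ball (0 : ℂ) 1, 0 ≤ (p z).re) {k : ℕ} (hk : k ≠ 0) :
    ‖c k‖ ≤ 2 * (c 0).re := by
  have hseries : HasFPowerSeriesOnBall p (ofScalars ℂ c) 0 1 :=
    hasFPowerSeriesOnBall_ofScalars_of_hasSum one_pos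
      (by rwa [← ENNReal.ofReal_one, Metric.eball_ofReal])
  have hdilate : ∀ r ∈ Set.Ioo (0 : ℝ) 1, ‖c k‖ * r ^ k ≤ 2 * (c 0).re := by
    rintro r ⟨hr0, hr1⟩
    have hu : Summable fun j => ‖c j * (r : ℂ) ^ j‖ := by
      have := (ofScalars ℂ c).summable_norm_mul_pow (r := r.toNNReal)
        (lt_of_lt_of_le (by simpa using hr1) hseries.r_le)
      simpa [ofScalars_norm, hr0.le, abs_of_pos hr0] using this
    have hz : ∀ θ : ℝ, (r : ℂ) * fourierMode 1 θ ∈ Metric.ball (0 : ℂ) 1 := fun θ => by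
      simpa [abs_of_pos hr0] using hr1
    have hcircle : ∀ θ : ℝ, ∑' j : ℕ, c j * (r : ℂ) ^ j * fourierMode j θ
        = p (r * fourierMode 1 θ) := fun θ => by
      simp_rw [← (hp _ (hz θ)).tsum_eq, mul_pow, fourierMode_one_pow, mul_assoc]
    have := norm_le_two_mul_re_of_re_tsum_nonneg hu (fun θ => hcircle θ ▸ hre _ (hz θ)) hk
    simpa [abs_of_pos hr0] using this
  have hlim : Tendsto (fun r : ℝ => ‖c k‖ * r ^ k) (𝓝[<] 1) (𝓝 ‖c k‖) := by
    refine ((by fun_prop : Continuous fun r : ℝ => ‖c k‖ * r ^ k).tendsto' 1 _ ?_).mono_left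
      nhdsWithin_le_nhds
    simp
  exact le_of_tendsto hlim (eventually_of_mem (Ioo_mem_nhdsLT zero_lt_one) hdilate)

end PowerSeries

lemma exists_norm_eq_one_norm_add_mul_eq (x y : ℂ) :
    ∃ ν : ℂ, ‖ν‖ = 1 ∧ ‖x + ν * y‖ = ‖x‖ + ‖y‖ := by
  rcases eq_or_ne x 0 with rfl | hx
  · exact ⟨1, by simp⟩
  rcases eq_or_ne y 0 with rfl | hy
  · exact ⟨1, by simp⟩
  refine ⟨(‖y‖ / ‖x‖ : ℝ) * x / y, by simp [hx, hy], ?_⟩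
  have : x + (‖y‖ / ‖x‖ : ℝ) * x / y * y = ((1 + ‖y‖ / ‖x‖ : ℝ) : ℂ) * x := by
    have hx' : (‖x‖ : ℂ) ≠ 0 := by simpa using hx
    push_cast; field_simp
  rw [this, norm_mul, Complex.norm_real, Real.norm_of_nonneg (by positivity)]
  field_simp

lemma PH0.hasSum_add_mul_deriv_deriv {M : ℝ} {a b : ℕ → ℂ} {h g : ℂ → ℂ}
    (hf : PH0 M a b h g) (ν : ℂ) :
    ∀ z ∈ Metric.ball (0 : ℂ) 1, HasSum
      (fun m : ℕ => ((if m = 0 then (M : ℂ) else 0) + m * (m + 1) * (a (m + 1) + ν * b (m + 1)))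
        * z ^ m)
      (M + (z * deriv (deriv h) z + ν * (z * deriv (deriv g) z))) := by
  intro z hz
  have hconst : HasSum (fun m : ℕ => (if m = 0 then (M : ℂ) else 0) * z ^ m) M := by
    simpa using hasSum_single (f := fun m : ℕ => (if m = 0 then (M : ℂ) else 0) * z ^ m) 0
      (fun m hm => by simp [hm])
  convert hconst.add
    ((hasSum_mul_deriv_deriv_of_hasSum_add_two 0 1 (by simpa using hf.1) z hz).add
      ((hasSum_mul_deriv_deriv_of_hasSum_add_two 0 0 (by simpa using hf.2.1) z hz).mul_left ν))
    using 1
  funext m; ring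

lemma PH0.re_add_mul_deriv_deriv_nonneg {M : ℝ} {a b : ℕ → ℂ} {h g : ℂ → ℂ}
    (hf : PH0 M a b h g) {ν : ℂ} (hν : ‖ν‖ = 1) :
    ∀ z ∈ Metric.ball (0 : ℂ) 1,
      0 ≤ ((M : ℂ) + (z * deriv (deriv h) z + ν * (z * deriv (deriv g) z))).re := by
  intro z hz
  have hνg : -‖z * deriv (deriv g) z‖ ≤ (ν * (z * deriv (deriv g) z)).re :=
    (abs_le.mp ((abs_re_le_norm _).trans_eq (by rw [norm_mul, hν, one_mul]))).1
  simp only [add_re, ofReal_re]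
  linarith [hf.2.2 z hz]

theorem coeff_sum_bound_general (M : ℝ) (a b : ℕ → ℂ) (h g : ℂ → ℂ)
    (hf : PH0 M a b h g) (n : ℕ) (hn : 2 ≤ n) :
    ‖a n‖ + ‖b n‖ ≤ 2 * M / ((n : ℝ) * ((n : ℝ) - 1)) := by
  obtain ⟨ν, hν, hνab⟩ := exists_norm_eq_one_norm_add_mul_eq (a n) (b n)
  obtain ⟨k, rfl⟩ : ∃ k, n = k + 1 := ⟨n - 1, by omega⟩
  have hk : k ≠ 0 := by omega
  have hbound := norm_coeff_le_two_mul_re_of_re_nonneg (hf.hasSum_add_mul_deriv_deriv ν)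
    (hf.re_add_mul_deriv_deriv_nonneg hν) hk
  simp only [hk, ↓reduceIte, ← Nat.cast_add_one, zero_add, Complex.norm_mul,
    RCLike.norm_natCast, hνab, CharP.cast_eq_zero, mul_one, zero_mul, add_zero, ofReal_re] at hbound
  rw [le_div_iff₀ (by push_cast; rw [add_sub_cancel_right]; positivity)]
  push_cast at hbound ⊢
  linarith

/-- Coefficient bound `|a_n| + |b_n| ≤ 2M/(n(n-1))` for `f ∈ P⁰_H(M)`. -/
theorem coeff_sum_bound (M : ℝ) (hM : 0 < M) (a b : ℕ → ℂ) (h g : ℂ → ℂ)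
    (hf : PH0 M a b h g) (n : ℕ) (hn : 2 ≤ n) :
    ‖a n‖ + ‖b n‖ ≤ 2 * M / ((n : ℝ) * ((n : ℝ) - 1)) :=
  coeff_sum_bound_general M a b h g hf n hn
end

section
/- Let M > 0 and let f = h + conj(g) belong to the class P⁰_H(M), with power series h(z) = z + Σ_{n=2}^∞ a_n zⁿ and g(z) = Σ_{n=2}^∞ b_n zⁿ. Then for every integer n ≥ 2 one has |a_n| ≤ 2M/(n(n−1)). -/
open Filter MeasureTheory

/-!
Carathéodory's argument. Differentiating the power series of `h` termwise gives
`p(z) = z h''(z) = ∑_{k ≥ 1} k (k+1) a_{k+1} z^k`, and the hypothesis says `Re p + M ≥ 0`.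
On a circle `|z| = r < 1`, since `Re p = (p + conj p)/2` and `p` has only positive frequencies, the
`(-k)`-th Fourier coefficient of the nonnegative function `Re p + M` is `π k (k+1) a_{k+1} r^k`,
while its integral is `2πM`. A Fourier coefficient of a nonnegative function is bounded by its
integral, so `k (k+1) |a_{k+1}| r^k ≤ 2M`; let `r → 1`.
-/

open Complex Metric Topology
open scoped Real ComplexConjugate

lemma summable_norm_mul_pow_of_summable {c : ℕ → ℂ} {w : ℂ} {r : ℝ}
    (hs : Summable fun n => c n * w ^ n) (hr0 : 0 ≤ r) (hr : r < ‖w‖) :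
    Summable fun n => ‖c n‖ * r ^ n := by
  obtain ⟨C, hC⟩ := (tendsto_norm_zero.comp hs.tendsto_atTop_zero).bddAbove_range
  have hw : 0 < ‖w‖ := hr0.trans_lt hr
  refine .of_nonneg_of_le (fun n => by positivity) (fun n => ?_)
    ((summable_geometric_of_lt_one (by positivity) ((div_lt_one hw).2 hr)).mul_left C)
  calc ‖c n‖ * r ^ n = ‖c n * w ^ n‖ * (r / ‖w‖) ^ n := by
        rw [norm_mul, norm_pow, div_pow]; field_simp
    _ ≤ C * (r / ‖w‖) ^ n := by gcongr; exact hC ⟨n, rfl⟩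

lemma summable_norm_mul_pow_of_forall_summable {c : ℕ → ℂ} {R r : ℝ}
    (hs : ∀ z ∈ ball (0 : ℂ) R, Summable fun n => c n * z ^ n) (hr0 : 0 ≤ r) (hr : r < R) :
    Summable fun n => ‖c n‖ * r ^ n := by
  obtain ⟨ρ, hrρ, hρR⟩ := exists_between hr
  have hρ : ‖(ρ : ℂ)‖ = ρ := by simp [abs_of_pos (hr0.trans_lt hrρ)]
  exact summable_norm_mul_pow_of_summable (hs ρ (mem_ball_zero_iff.2 (hρ.symm ▸ hρR))) hr0
    (hρ.symm ▸ hrρ)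

lemma hasSum_deriv_of_hasSum_pow {c : ℕ → ℂ} {f : ℂ → ℂ} {R : ℝ}
    (hf : ∀ z ∈ ball (0 : ℂ) R, HasSum (fun n => c n * z ^ n) (f z))
    {z : ℂ} (hz : z ∈ ball (0 : ℂ) R) :
    HasSum (fun n => (n + 1) * c (n + 1) * z ^ n) (deriv f z) := by
  obtain ⟨r, hzr, hrR⟩ := exists_between (mem_ball_zero_iff.1 hz)
  have hsum := summable_norm_mul_pow_of_forall_summable (fun w hw => (hf w hw).summable)
    ((norm_nonneg z).trans hzr.le) hrR
  have hbound : ∀ n, ∀ w ∈ ball (0 : ℂ) r, ‖c n * w ^ n‖ ≤ ‖c n‖ * r ^ n := fun n w hw => by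
    rw [norm_mul, norm_pow]
    gcongr
    exact (mem_ball_zero_iff.1 hw).le
  have hderiv := hasSum_deriv_of_summable_norm hsum
    (fun n => ((differentiable_pow n).const_mul (c n)).differentiableOn) isOpen_ball hbound
    (mem_ball_zero_iff.2 hzr)
  have hfz : f =ᶠ[𝓝 z] fun w => ∑' n, c n * w ^ n :=
    eventually_of_mem (isOpen_ball.mem_nhds hz) fun w hw => (hf w hw).tsum_eq.symm
  rw [← hfz.deriv_eq, ← hasSum_nat_add_iff' 1] at hderiv
  simpa [mul_comm, mul_left_comm, mul_assoc] using hderiv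

lemma hasSum_mul_deriv_of_hasSum_pow {c : ℕ → ℂ} {f : ℂ → ℂ} {R : ℝ}
    (hf : ∀ z ∈ ball (0 : ℂ) R, HasSum (fun n => c n * z ^ n) (f z))
    {z : ℂ} (hz : z ∈ ball (0 : ℂ) R) :
    HasSum (fun n => n * c n * z ^ n) (z * deriv f z) := by
  rw [← hasSum_nat_add_iff' 1]
  simpa [pow_succ, mul_comm, mul_left_comm, mul_assoc] using
    (hasSum_deriv_of_hasSum_pow hf hz).mul_left z

lemma integral_exp_int_mul_mul_I (j : ℤ) :
    ∫ θ in (0 : ℝ)..2 * π, exp (j * θ * I) = if j = 0 then ((2 * π : ℝ) : ℂ) else 0 := by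
  split_ifs with hj
  · simp [hj]
  have hjI : (j : ℂ) * I ≠ 0 := mul_ne_zero (Int.cast_ne_zero.2 hj) I_ne_zero
  simp_rw [mul_right_comm _ _ I]
  rw [integral_exp_mul_complex hjI]
  have : (j : ℂ) * I * ((2 * π : ℝ) : ℂ) = j * (2 * π * I) := by push_cast; ring
  rw [this, exp_int_mul_two_pi_mul_I]
  simp

section CircleFourier

variable {c : ℕ → ℂ} {p : ℂ → ℂ} {r : ℝ} (hr : 0 ≤ r) (hc : Summable fun n => ‖c n‖ * r ^ n)
  (hp : ∀ θ : ℝ, HasSum (fun n => c n * circleMap 0 r θ ^ n) (p (circleMap 0 r θ)))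
include hr hc hp

lemma continuous_comp_circleMap_of_hasSum :
    Continuous fun θ => p (circleMap 0 r θ) := by
  simp_rw [← fun θ => (hp θ).tsum_eq]
  refine continuous_tsum (fun n => continuous_const.mul ((continuous_circleMap 0 r).pow n)) hc
    fun n θ => ?_
  simp [norm_circleMap_zero, abs_of_nonneg hr]

lemma hasSum_integral_circleMap_mul_exp (j : ℤ) :
    HasSum (fun n => c n * r ^ n * if (n : ℤ) + j = 0 then ((2 * π : ℝ) : ℂ) else 0)
      (∫ θ in (0 : ℝ)..2 * π, p (circleMap 0 r θ) * exp (j * θ * I)) := by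
  have hterm : ∀ (n : ℕ) (θ : ℝ), c n * circleMap 0 r θ ^ n * exp (j * θ * I) =
      c n * r ^ n * exp (((n + j : ℤ) : ℂ) * θ * I) := fun n θ => by
    rw [circleMap_zero, mul_pow, ← exp_nat_mul, mul_assoc, mul_assoc, ← exp_add]
    push_cast
    ring_nf
  have hsum := intervalIntegral.hasSum_integral_of_dominated_convergence (μ := volume)
    (a := 0) (b := 2 * π) (F := fun n θ => c n * circleMap 0 r θ ^ n * exp (j * θ * I))
    (fun n _ => ‖c n‖ * r ^ n) (fun n => by fun_prop) ?_ (.of_forall fun _ _ => hc)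
    intervalIntegrable_const
    (.of_forall fun θ _ => (hp θ).mul_right _)
  · simpa only [hterm, intervalIntegral.integral_const_mul, integral_exp_int_mul_mul_I]
      using hsum
  · refine fun n => .of_forall fun θ _ => ?_
    simp [norm_circleMap_zero, abs_of_nonneg hr, norm_exp]

lemma integral_circleMap_mul_exp_neg (k : ℕ) :
    ∫ θ in (0 : ℝ)..2 * π, p (circleMap 0 r θ) * exp ((-k : ℤ) * θ * I) = 2 * π * c k * r ^ k := by
  refine (hasSum_integral_circleMap_mul_exp hr hc hp (-k)).unique ?_
  convert hasSum_single k fun n hn => ?_ using 1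
  · simp; ring
  · simp only [mul_eq_zero, ite_eq_right_iff]
    omega

lemma integral_circleMap_mul_exp_of_ne_zero {k : ℕ} (hk : k ≠ 0) :
    ∫ θ in (0 : ℝ)..2 * π, p (circleMap 0 r θ) * exp ((k : ℤ) * θ * I) = 0 := by
  refine (hasSum_integral_circleMap_mul_exp hr hc hp k).unique ?_
  convert hasSum_zero with n
  simp only [mul_eq_zero, ite_eq_right_iff]
  omega

lemma integral_re_circleMap_mul_exp_neg {k : ℕ} (hk : k ≠ 0) :
    ∫ θ in (0 : ℝ)..2 * π, ((p (circleMap 0 r θ)).re : ℂ) * exp ((-k : ℤ) * θ * I) =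
      π * c k * r ^ k := by
  have hpc := continuous_comp_circleMap_of_hasSum hr hc hp
  have hsplit : ∀ θ : ℝ, ((p (circleMap 0 r θ)).re : ℂ) * exp ((-k : ℤ) * θ * I) =
      (p (circleMap 0 r θ) * exp ((-k : ℤ) * θ * I) +
        conj (p (circleMap 0 r θ) * exp ((k : ℤ) * θ * I))) / 2 := fun θ => by
    rw [re_eq_add_conj, map_mul, ← exp_conj]
    simp only [map_mul, conj_ofReal, conj_I, map_intCast]
    push_cast
    ring_nf
  simp_rw [hsplit]
  rw [intervalIntegral.integral_div, intervalIntegral.integral_add,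
    intervalIntegral.intervalIntegral_conj, integral_circleMap_mul_exp_neg hr hc hp,
    integral_circleMap_mul_exp_of_ne_zero hr hc hp hk]
  · simp
    ring
  · exact (hpc.fun_mul (by fun_prop)).intervalIntegrable _ _
  · exact (continuous_conj.comp (hpc.fun_mul (by fun_prop))).intervalIntegrable _ _

lemma norm_coeff_mul_pow_le_of_neg_le_re_on_circle {M : ℝ}
    (hre : ∀ θ : ℝ, -M ≤ (p (circleMap 0 r θ)).re) {k : ℕ} (hk : k ≠ 0) :
    ‖c k‖ * r ^ k ≤ 2 * ((c 0).re + M) := by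
  have hpc := continuous_comp_circleMap_of_hasSum hr hc hp
  set u : ℝ → ℝ := fun θ => (p (circleMap 0 r θ)).re + M with hu_def
  have hu : ∀ θ, 0 ≤ u θ := fun θ => by linarith [hre θ]
  have hcoeff : ∫ θ in (0 : ℝ)..2 * π, (u θ : ℂ) * exp ((-k : ℤ) * θ * I) = π * c k * r ^ k := by
    simp_rw [hu_def, ofReal_add, add_mul]
    rw [intervalIntegral.integral_add, integral_re_circleMap_mul_exp_neg hr hc hp hk,
      intervalIntegral.integral_const_mul, integral_exp_int_mul_mul_I, if_neg (by omega)]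
    · simp
    · exact ((continuous_ofReal.comp (continuous_re.comp hpc)).fun_mul
        (by fun_prop)).intervalIntegrable _ _
    · exact (continuous_const.fun_mul (by fun_prop)).intervalIntegrable _ _
  have hmean : ∫ θ in (0 : ℝ)..2 * π, u θ = 2 * π * ((c 0).re + M) := by
    have h0 := integral_circleMap_mul_exp_neg hr hc hp 0
    simp only [CharP.cast_eq_zero, neg_zero, Int.cast_zero, zero_mul, exp_zero, mul_one,
      pow_zero] at h0
    have hre_int :=
      intervalIntegral.intervalIntegral_re (μ := volume) (hpc.intervalIntegrable 0 (2 * π))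
    simp only [RCLike.re_to_complex, h0] at hre_int
    rw [hu_def, intervalIntegral.integral_add _ intervalIntegrable_const, hre_int]
    · simp
      ring
    · exact (continuous_re.comp hpc).intervalIntegrable _ _
  have hbound : π * (‖c k‖ * r ^ k) ≤ π * (2 * ((c 0).re + M)) :=
    calc π * (‖c k‖ * r ^ k) = ‖∫ θ in (0 : ℝ)..2 * π, (u θ : ℂ) * exp ((-k : ℤ) * θ * I)‖ := by
          rw [hcoeff]; simp [abs_of_nonneg hr, abs_of_pos Real.pi_pos]; ring
      _ ≤ ∫ θ in (0 : ℝ)..2 * π, u θ :=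
          (intervalIntegral.norm_integral_le_integral_norm Real.two_pi_pos.le).trans_eq
            (intervalIntegral.integral_congr fun θ _ => by simp [norm_exp, abs_of_nonneg (hu θ)])
      _ = π * (2 * ((c 0).re + M)) := by rw [hmean]; ring
  exact le_of_mul_le_mul_left hbound Real.pi_pos

end CircleFourier

lemma norm_coeff_mul_pow_le_of_neg_le_re {c : ℕ → ℂ} {p : ℂ → ℂ} {R M : ℝ}
    (hR : 0 < R) (hp : ∀ w ∈ ball (0 : ℂ) R, HasSum (fun n => c n * w ^ n) (p w))
    (hre : ∀ w ∈ ball (0 : ℂ) R, -M ≤ (p w).re) {k : ℕ} (hk : k ≠ 0) :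
    ‖c k‖ * R ^ k ≤ 2 * ((c 0).re + M) := by
  have hcircle : ∀ r ∈ Set.Ioo 0 R, ‖c k‖ * r ^ k ≤ 2 * ((c 0).re + M) := by
    rintro r ⟨hr0, hrR⟩
    have hmem : ∀ θ, circleMap 0 r θ ∈ ball (0 : ℂ) R := fun θ => by
      simpa [norm_circleMap_zero, abs_of_pos hr0] using hrR
    exact norm_coeff_mul_pow_le_of_neg_le_re_on_circle hr0.le
      (summable_norm_mul_pow_of_forall_summable (fun w hw => (hp w hw).summable) hr0.le hrR)
      (fun θ => hp _ (hmem θ)) (fun θ => hre _ (hmem θ)) hk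
  refine le_of_tendsto ?_ (eventually_of_mem (Ioo_mem_nhdsLT hR) hcircle)
  exact ((continuous_const.mul (continuous_pow k)).tendsto R).mono_left nhdsWithin_le_nhds

theorem coeff_a_bound_general (M : ℝ) (a b : ℕ → ℂ) (h g : ℂ → ℂ)
    (hf : PH0 M a b h g) (n : ℕ) (hn : 2 ≤ n) :
    ‖a n‖ ≤ 2 * M / ((n : ℝ) * ((n : ℝ) - 1)) := by
  obtain ⟨hh, -, hre⟩ := hf
  -- the Taylor coefficients `0, 1, a 2, a 3, …` of `h`
  set c : ℕ → ℂ := fun n => if n < 2 then n else a n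
  have hc : ∀ z ∈ ball (0 : ℂ) 1, HasSum (fun n => c n * z ^ n) (h z) := fun z hz => by
    rw [← hasSum_nat_add_iff' 2]
    simpa [c, Finset.sum_range_succ] using hh z hz
  have hzh'' : ∀ z ∈ ball (0 : ℂ) 1,
      HasSum (fun n => n * ((n + 1) * c (n + 1)) * z ^ n) (z * deriv (deriv h) z) :=
    fun z hz => hasSum_mul_deriv_of_hasSum_pow (fun w hw => hasSum_deriv_of_hasSum_pow hc hw) hz
  obtain ⟨k, rfl⟩ : ∃ k, n = k + 1 := ⟨n - 1, by omega⟩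
  have hbound := norm_coeff_mul_pow_le_of_neg_le_re one_pos hzh''
    (fun z hz => by linarith [hre z hz, norm_nonneg (z * deriv (deriv g) z)]) (k := k) (by omega)
  have hck : c (k + 1) = a (k + 1) := if_neg (by omega)
  have hk : (1 : ℝ) ≤ k := by exact_mod_cast (by omega : 1 ≤ k)
  simp only [hck, norm_mul, one_pow, mul_one, ← Nat.cast_add_one, Complex.norm_natCast,
    CharP.cast_eq_zero, zero_mul, zero_re, zero_add] at hbound
  rw [le_div_iff₀ (by push_cast; nlinarith)]
  push_cast at hbound ⊢
  linarith

/-- Coefficient bound `|a_n| ≤ 2M/(n(n-1))` for `f ∈ P⁰_H(M)`. -/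
theorem coeff_a_bound (M : ℝ) (hM : 0 < M) (a b : ℕ → ℂ) (h g : ℂ → ℂ)
    (hf : PH0 M a b h g) (n : ℕ) (hn : 2 ≤ n) :
    ‖a n‖ ≤ 2 * M / ((n : ℝ) * ((n : ℝ) - 1)) :=
  coeff_a_bound_general M a b h g hf n hn
end

section
/- Let M > 0 and let f belong to the class P⁰_H(M). Then for every z ∈ 𝔻, |z| + 2M Σ_{n=2}^∞ (−1)^{n−1} |z|ⁿ/(n(n−1)) ≤ |f(z)| ≤ |z| + 2M Σ_{n=2}^∞ |z|ⁿ/(n(n−1)). -/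
open Filter MeasureTheory

/-!
For every unimodular `ε` the holomorphic function `F = h + ε g` satisfies `Re (z F''(z)) > -M`,
so Schwarz's lemma applied to `p / (p + 2M)`, where `p = z F''`, gives
`|p(z)| ≤ 2M|z|/(1-|z|)` and `Re p(z) ≥ -2M|z|/(1+|z|)`. Integrating twice along the radius
`[0, z]` bounds `|h(z) + ε g(z) - z|` by `2M((1-r) log(1-r) + r)`, `r = |z|`; choosing `ε` so that
`ε g(z)` points in the direction of `h(z) - z` gives the upper bound. For the lower bound one
integration, with `ε g'` pointing against `g'`, gives `Re h' - |g'| ≥ 1 - 2M log(1+r)`, and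
integrating `Re (conj z · f(tz))` over `t ∈ [0, 1]` gives
`r |f(z)| ≥ r (r - 2M((1+r) log(1+r) - r))`.
The two closed forms are the sums of the series in the statement.
-/

open Metric Set ComplexConjugate

theorem hasSum_pow_div_mul_of_abs_lt_one {x : ℝ} (hx : |x| < 1) :
    HasSum (fun n : ℕ => x ^ (n + 2) / (((n : ℝ) + 2) * ((n : ℝ) + 1)))
      (x + (1 - x) * Real.log (1 - x)) := by
  have hlog := Real.hasSum_pow_div_log_of_abs_lt_one hx
  have hshift : HasSum (fun n : ℕ => x ^ (n + 2) / ((n : ℝ) + 2)) (-Real.log (1 - x) - x) := by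
    have := (hasSum_nat_add_iff' 1).mpr hlog
    simp only [Finset.range_one, Finset.sum_singleton, zero_add, pow_one, Nat.cast_zero,
      div_one] at this
    refine this.congr_fun fun n => ?_
    push_cast
    ring
  have := (hlog.mul_left x).sub hshift
  rw [show x * -Real.log (1 - x) - (-Real.log (1 - x) - x) = x + (1 - x) * Real.log (1 - x) by
    ring] at this
  refine this.congr_fun fun n => ?_
  field_simp
  ring

theorem hasSum_neg_one_pow_mul_pow_div_mul_of_abs_lt_one {x : ℝ} (hx : |x| < 1) :
    HasSum (fun n : ℕ => (-1 : ℝ) ^ (n + 1) * x ^ (n + 2) / (((n : ℝ) + 2) * ((n : ℝ) + 1)))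
      (x - (1 + x) * Real.log (1 + x)) := by
  have := (hasSum_pow_div_mul_of_abs_lt_one (x := -x) (by rwa [abs_neg])).neg
  rw [show -(-x + (1 - -x) * Real.log (1 - -x)) = x - (1 + x) * Real.log (1 + x) by
    rw [sub_neg_eq_add]; ring] at this
  refine this.congr_fun fun n => ?_
  rw [neg_pow x]
  ring

theorem one_le_radius_ofScalars {c : ℕ → ℂ}
    (hc : ∀ z ∈ ball (0 : ℂ) 1, Summable fun n => c n * z ^ n) :
    1 ≤ (FormalMultilinearSeries.ofScalars ℂ c).radius := by
  refine ENNReal.le_of_forall_nnreal_lt fun r hr => ?_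
  have hr : (r : ℂ) ∈ ball (0 : ℂ) 1 := by simpa using hr
  refine FormalMultilinearSeries.le_radius_of_tendsto (l := 0) _ ?_
  simpa [norm_mul, norm_pow] using (hc _ hr).tendsto_atTop_zero.norm

theorem differentiableOn_tsum_mul_pow {c : ℕ → ℂ}
    (hc : ∀ z ∈ ball (0 : ℂ) 1, Summable fun n => c n * z ^ n) :
    DifferentiableOn ℂ (fun z => ∑' n, c n * z ^ n) (ball 0 1) := by
  have hsum := (FormalMultilinearSeries.ofScalars ℂ c).hasFPowerSeriesOnBall
    (zero_lt_one.trans_le (one_le_radius_ofScalars hc))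
  rw [← FormalMultilinearSeries.ofScalarsSum, FormalMultilinearSeries.ofScalarsSum_eq_tsum] at hsum
  refine hsum.differentiableOn.mono ?_
  rw [← eball_ofReal, ENNReal.ofReal_one]
  exact eball_subset_eball (one_le_radius_ofScalars hc)

theorem exists_differentiableOn_eqOn_sq_mul_of_hasSum {c : ℕ → ℂ} {k : ℂ → ℂ}
    (hk : ∀ z ∈ ball (0 : ℂ) 1, HasSum (fun n => c n * z ^ (n + 2)) (k z)) :
    ∃ S : ℂ → ℂ, DifferentiableOn ℂ S (ball 0 1) ∧ EqOn k (fun z => z ^ 2 * S z) (ball 0 1) := by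
  have hc : ∀ z ∈ ball (0 : ℂ) 1, z ≠ 0 → HasSum (fun n => c n * z ^ n) (k z / z ^ 2) :=
    fun z hz hz0 => ((hk z hz).div_const (z ^ 2)).congr_fun fun n => by field_simp; ring
  refine ⟨_, differentiableOn_tsum_mul_pow (c := c) fun z hz => ?_, fun z hz => ?_⟩
  · rcases eq_or_ne z 0 with rfl | hz0
    · exact (hasSum_single 0 fun n hn => by simp [hn]).summable
    · exact (hc z hz hz0).summable
  · rcases eq_or_ne z 0 with rfl | hz0
    · simpa using (hk 0 hz).unique (by simp)
    · simp only [(hc z hz hz0).tsum_eq]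
      field_simp

theorem differentiableOn_of_forall_hasSum_mul_pow_add_two {c : ℕ → ℂ} {k : ℂ → ℂ}
    (hk : ∀ z ∈ ball (0 : ℂ) 1, HasSum (fun n => c n * z ^ (n + 2)) (k z)) :
    DifferentiableOn ℂ k (ball 0 1) := by
  obtain ⟨S, hS, hkS⟩ := exists_differentiableOn_eqOn_sq_mul_of_hasSum hk
  exact ((differentiableOn_pow 2).mul hS).congr hkS

theorem hasDerivAt_zero_of_forall_hasSum_mul_pow_add_two {c : ℕ → ℂ} {k : ℂ → ℂ}
    (hk : ∀ z ∈ ball (0 : ℂ) 1, HasSum (fun n => c n * z ^ (n + 2)) (k z)) :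
    HasDerivAt k 0 0 := by
  obtain ⟨S, hS, hkS⟩ := exists_differentiableOn_eqOn_sq_mul_of_hasSum hk
  refine HasDerivAt.congr_of_eventuallyEq ?_ (eventuallyEq_of_mem (ball_mem_nhds 0 one_pos) hkS)
  exact ((hasDerivAt_pow 2 (0 : ℂ)).mul (hS.hasDerivAt (ball_mem_nhds 0 one_pos))).congr_deriv
    (by simp)

theorem norm_div_one_sub_le {x : ℂ} {s : ℝ} (hx : ‖x‖ ≤ s) (hs : s < 1) :
    ‖x / (1 - x)‖ ≤ s / (1 - s) := by
  have h1 : 1 - s ≤ ‖1 - x‖ := by linarith [norm_sub_norm_le (1 : ℂ) x, norm_one (α := ℂ)]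
  rw [norm_div]
  exact div_le_div₀ ((norm_nonneg x).trans hx) hx (by linarith) h1

theorem neg_div_one_add_le_re_div_one_sub {x : ℂ} {s : ℝ} (hx : ‖x‖ ≤ s) (hs : s < 1) :
    -(s / (1 + s)) ≤ (x / (1 - x)).re := by
  have hs0 : 0 ≤ s := (norm_nonneg x).trans hx
  have hsq : x.re * x.re + x.im * x.im ≤ s * s := by
    rw [← Complex.normSq_apply, ← Complex.sq_norm]
    nlinarith [norm_nonneg x]
  have hre : -s ≤ x.re := by linarith [neg_abs_le x.re, Complex.abs_re_le_norm x]
  have hD : 0 < Complex.normSq (1 - x) :=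
    Complex.normSq_pos.mpr (sub_ne_zero.mpr fun h => by subst h; rw [norm_one] at hx; linarith)
  rw [Complex.div_re, ← add_div, neg_div', div_le_div_iff₀ (by linarith) hD,
    Complex.normSq_apply]
  simp only [Complex.sub_re, Complex.sub_im, Complex.one_re, Complex.one_im]
  nlinarith [mul_nonneg (sub_nonneg.mpr hs.le) (neg_le_iff_add_nonneg.mp hre)]

theorem exists_eq_mul_div_one_sub_of_neg_lt_re {p : ℂ → ℂ} {M : ℝ}
    (hp : DifferentiableOn ℂ p (ball 0 1)) (hp0 : p 0 = 0)
    (hre : ∀ z ∈ ball (0 : ℂ) 1, -M < (p z).re) {z : ℂ} (hz : z ∈ ball (0 : ℂ) 1) :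
    ∃ ω : ℂ, ‖ω‖ ≤ ‖z‖ ∧ p z = ((2 * M : ℝ) : ℂ) * (ω / (1 - ω)) := by
  have hM : 0 < M := by simpa [hp0] using hre 0 (mem_ball_self one_pos)
  have hlt : ∀ u ∈ ball (0 : ℂ) 1, ‖p u‖ < ‖p u + (2 * M : ℝ)‖ := fun u hu => by
    rw [← sq_lt_sq₀ (norm_nonneg _) (norm_nonneg _), Complex.sq_norm, Complex.sq_norm,
      Complex.normSq_apply, Complex.normSq_apply, Complex.add_re, Complex.add_im,
      Complex.ofReal_re, Complex.ofReal_im, add_zero]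
    nlinarith [hre u hu]
  have hne : ∀ u ∈ ball (0 : ℂ) 1, p u + (2 * M : ℝ) ≠ 0 := fun u hu h =>
    (norm_nonneg (p u)).not_gt (by simpa only [h, norm_zero] using hlt u hu)
  have hω : MapsTo (fun u => p u / (p u + (2 * M : ℝ))) (ball 0 1) (closedBall 0 1) :=
    fun u hu => by
      rw [mem_closedBall_zero_iff, norm_div]
      exact div_le_one_of_le₀ (hlt u hu).le (norm_nonneg _)
  refine ⟨p z / (p z + (2 * M : ℝ)), Complex.norm_le_norm_of_mapsTo_ball
    (hp.div (hp.add_const _) hne) hω (by simp [hp0]) (mem_ball_zero_iff.mp hz), ?_⟩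
  have := hne z hz
  push_cast at this ⊢
  have : (M : ℂ) ≠ 0 := Complex.ofReal_ne_zero.mpr hM.ne'
  field_simp
  ring

theorem norm_le_of_neg_lt_re {p : ℂ → ℂ} {M : ℝ}
    (hp : DifferentiableOn ℂ p (ball 0 1)) (hp0 : p 0 = 0)
    (hre : ∀ z ∈ ball (0 : ℂ) 1, -M < (p z).re) {z : ℂ} (hz : z ∈ ball (0 : ℂ) 1) :
    ‖p z‖ ≤ 2 * M * ‖z‖ / (1 - ‖z‖) := by
  have hM : 0 < M := by simpa [hp0] using hre 0 (mem_ball_self one_pos)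
  obtain ⟨ω, hω, hpω⟩ := exists_eq_mul_div_one_sub_of_neg_lt_re hp hp0 hre hz
  rw [hpω, norm_mul, Complex.norm_real, Real.norm_of_nonneg (by positivity), mul_div_assoc]
  exact mul_le_mul_of_nonneg_left (norm_div_one_sub_le hω (mem_ball_zero_iff.mp hz))
    (by positivity)

theorem neg_le_re_of_neg_lt_re {p : ℂ → ℂ} {M : ℝ}
    (hp : DifferentiableOn ℂ p (ball 0 1)) (hp0 : p 0 = 0)
    (hre : ∀ z ∈ ball (0 : ℂ) 1, -M < (p z).re) {z : ℂ} (hz : z ∈ ball (0 : ℂ) 1) :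
    -(2 * M * ‖z‖ / (1 + ‖z‖)) ≤ (p z).re := by
  have hM : 0 < M := by simpa [hp0] using hre 0 (mem_ball_self one_pos)
  obtain ⟨ω, hω, hpω⟩ := exists_eq_mul_div_one_sub_of_neg_lt_re hp hp0 hre hz
  rw [hpω, Complex.re_ofReal_mul, mul_div_assoc, ← mul_neg]
  exact mul_le_mul_of_nonneg_left
    (neg_div_one_add_le_re_div_one_sub hω (mem_ball_zero_iff.mp hz)) (by positivity)

namespace Complex

theorem exists_norm_eq_one_mul_eq_norm (z : ℂ) : ∃ c : ℂ, ‖c‖ = 1 ∧ c * z = ‖z‖ := by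
  refine ⟨exp (-(arg z) * I), by simpa using norm_exp_ofReal_mul_I (-(arg z)), ?_⟩
  conv_lhs => rw [← norm_mul_exp_arg_mul_I z]
  rw [mul_left_comm, ← exp_add]
  simp

theorem exists_norm_eq_one_norm_add_mul_eq (a b : ℂ) :
    ∃ ε : ℂ, ‖ε‖ = 1 ∧ ‖a + ε * b‖ = ‖a‖ + ‖b‖ := by
  obtain ⟨c, hc, hca⟩ := exists_norm_eq_one_mul_eq_norm a
  obtain ⟨d, hd, hdb⟩ := exists_norm_eq_one_mul_eq_norm b
  have hc0 : c ≠ 0 := norm_ne_zero_iff.mp (hc ▸ one_ne_zero)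
  refine ⟨d / c, by simp [hc, hd], ?_⟩
  have : c * (a + d / c * b) = ((‖a‖ + ‖b‖ : ℝ) : ℂ) := by
    rw [mul_add, hca, ← mul_assoc, mul_div_cancel₀ _ hc0, hdb]; push_cast; ring
  rw [← one_mul ‖a + _‖, ← hc, ← norm_mul, this, norm_real, Real.norm_of_nonneg (by positivity)]

end Complex

theorem sub_le_re_sub_of_le_re_deriv {γ γ' : ℝ → ℂ} {B B' : ℝ → ℝ} {a b : ℝ} (hab : a ≤ b)
    (hγ : ∀ t ∈ Icc a b, HasDerivAt γ (γ' t) t) (hB : ∀ t ∈ Icc a b, HasDerivAt B (B' t) t)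
    (hle : ∀ t ∈ Ioo a b, B' t ≤ (γ' t).re) : B b - B a ≤ (γ b - γ a).re := by
  have hχ : ∀ t ∈ Icc a b, HasDerivAt (fun t => (γ t).re - B t) ((γ' t).re - B' t) t :=
    fun t ht => (Complex.reCLM.hasFDerivAt.comp_hasDerivAt t (hγ t ht)).sub (hB t ht)
  have := monotoneOn_of_hasDerivWithinAt_nonneg (convex_Icc a b)
    (fun t ht => (hχ t ht).continuousAt.continuousWithinAt)
    (fun t ht => (hχ t (interior_subset ht)).hasDerivWithinAt)
    (fun t ht => sub_nonneg.mpr (hle t (by rwa [interior_Icc] at ht)))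
    (left_mem_Icc.mpr hab) (right_mem_Icc.mpr hab) hab
  rw [Complex.sub_re]
  linarith

theorem HasDerivAt.comp_ofReal_mul {G : ℂ → ℂ} {G' w : ℂ} {t : ℝ} (hG : HasDerivAt G G' (t * w)) :
    HasDerivAt (fun s : ℝ => G (s * w)) (G' * w) t :=
  (hG.comp (t : ℂ) (hasDerivAt_mul_const w)).comp_ofReal

theorem ofReal_mul_mem_ball {t : ℝ} (ht : t ∈ Icc (0 : ℝ) 1) {w : ℂ} (hw : w ∈ ball (0 : ℂ) 1) :
    (t : ℂ) * w ∈ ball (0 : ℂ) 1 := by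
  simpa [Complex.real_smul] using
    (convex_ball (0 : ℂ) 1).smul_mem_of_zero_mem (mem_ball_self one_pos) hw ht

theorem sub_le_re_sub_of_le_re_mul_deriv {G G' : ℂ → ℂ} {φ ψ : ℝ → ℝ} {w : ℂ}
    (hG : ∀ u ∈ ball (0 : ℂ) 1, HasDerivAt G (G' u) u)
    (hφ : ∀ s ∈ Ico (0 : ℝ) 1, HasDerivAt φ (ψ s) s)
    (hle : ∀ u ∈ ball (0 : ℂ) 1, ‖u‖ * ψ ‖u‖ ≤ (u * G' u).re) (hw : w ∈ ball (0 : ℂ) 1) :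
    φ ‖w‖ - φ 0 ≤ (G w - G 0).re := by
  have hr : ‖w‖ < 1 := mem_ball_zero_iff.mp hw
  have key := sub_le_re_sub_of_le_re_deriv zero_le_one (γ := fun t : ℝ => G (t * w))
    (γ' := fun t => G' (t * w) * w) (B := fun t => φ (t * ‖w‖))
    (B' := fun t => ψ (t * ‖w‖) * ‖w‖)
    (fun t ht => (hG _ (ofReal_mul_mem_ball ht hw)).comp_ofReal_mul)
    (fun t ht => (hφ _ ⟨mul_nonneg ht.1 (norm_nonneg w),
      (mul_le_of_le_one_left (norm_nonneg w) ht.2).trans_lt hr⟩).comp t (hasDerivAt_mul_const _))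
    (fun t ht => ?_)
  · simpa using key
  · have := hle _ (ofReal_mul_mem_ball (Ioo_subset_Icc_self ht) hw)
    rw [norm_mul, Complex.norm_real, Real.norm_of_nonneg ht.1.le, mul_assoc (t : ℂ), mul_comm w,
      Complex.re_ofReal_mul, mul_assoc, mul_comm ‖w‖] at this
    exact le_of_mul_le_mul_left this ht.1

theorem norm_sub_le_of_norm_mul_deriv_le {G G' : ℂ → ℂ} {φ ψ : ℝ → ℝ} {w : ℂ}
    (hG : ∀ u ∈ ball (0 : ℂ) 1, HasDerivAt G (G' u) u)
    (hφ : ∀ s ∈ Ico (0 : ℝ) 1, HasDerivAt φ (ψ s) s)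
    (hle : ∀ u ∈ ball (0 : ℂ) 1, ‖u * G' u‖ ≤ ‖u‖ * ψ ‖u‖) (hw : w ∈ ball (0 : ℂ) 1) :
    ‖G w - G 0‖ ≤ φ ‖w‖ - φ 0 := by
  obtain ⟨c, hc, hcG⟩ := Complex.exists_norm_eq_one_mul_eq_norm (G w - G 0)
  have key := sub_le_re_sub_of_le_re_mul_deriv (G := fun u => -(c * G u))
    (G' := fun u => -(c * G' u)) (φ := fun s => -φ s) (ψ := fun s => -ψ s)
    (fun u hu => ((hG u hu).const_mul c).neg) (fun s hs => (hφ s hs).neg) (fun u hu => ?_) hw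
  · rw [show -(c * G w) - -(c * G 0) = -(c * (G w - G 0)) by ring, hcG] at key
    simp only [Complex.neg_re, Complex.ofReal_re] at key
    linarith
  · have h1 := Complex.re_le_norm (c * (u * G' u))
    rw [norm_mul, hc, one_mul] at h1
    rw [show u * -(c * G' u) = -(c * (u * G' u)) by ring, Complex.neg_re]
    linarith [hle u hu]

namespace Real

theorem hasDerivAt_log_one_sub {s : ℝ} (hs : s < 1) :
    HasDerivAt (fun s => log (1 - s)) (-(1 - s)⁻¹) s := by
  simpa [div_eq_inv_mul] using ((hasDerivAt_id s).const_sub 1).log (sub_ne_zero.mpr hs.ne')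

theorem hasDerivAt_log_one_add {s : ℝ} (hs : -1 < s) :
    HasDerivAt (fun s => log (1 + s)) (1 + s)⁻¹ s := by
  simpa [div_eq_inv_mul] using ((hasDerivAt_id s).const_add 1).log (by linarith : 1 + s ≠ 0)

theorem hasDerivAt_one_sub_mul_log_one_sub_add {s : ℝ} (hs : s < 1) :
    HasDerivAt (fun s => (1 - s) * log (1 - s) + s) (-log (1 - s)) s :=
  ((hasDerivAt_mul_log (sub_ne_zero.mpr hs.ne')).comp s
    ((hasDerivAt_id s).const_sub 1)).add (hasDerivAt_id s) |>.congr_deriv (by ring)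

theorem hasDerivAt_one_add_mul_log_one_add_sub {s : ℝ} (hs : -1 < s) :
    HasDerivAt (fun s => (1 + s) * log (1 + s) - s) (log (1 + s)) s :=
  ((hasDerivAt_mul_log (by linarith : 1 + s ≠ 0)).comp s
    ((hasDerivAt_id s).const_add 1)).sub (hasDerivAt_id s) |>.congr_deriv (by ring)

end Real

/-- `PH0` with `h` and `g` given as normalized holomorphic functions instead of power series. -/
structure HarmonicPH0 (M : ℝ) (h g : ℂ → ℂ) : Prop where
  differentiableOn_h : DifferentiableOn ℂ h (ball 0 1)
  differentiableOn_g : DifferentiableOn ℂ g (ball 0 1)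
  h_zero : h 0 = 0
  g_zero : g 0 = 0
  deriv_h_zero : deriv h 0 = 1
  deriv_g_zero : deriv g 0 = 0
  neg_add_norm_lt_re :
    ∀ z ∈ ball (0 : ℂ) 1, -M + ‖z * deriv (deriv g) z‖ < (z * deriv (deriv h) z).re

theorem PH0.harmonicPH0 {M : ℝ} {a b : ℕ → ℂ} {h g : ℂ → ℂ} (hf : PH0 M a b h g) :
    HarmonicPH0 M h g := by
  obtain ⟨ha, hb, hre⟩ := hf
  have hh : HasDerivAt h 1 0 := by
    simpa [Pi.add_def] using
      (hasDerivAt_zero_of_forall_hasSum_mul_pow_add_two ha).add (hasDerivAt_id 0)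
  exact {
    differentiableOn_h := by
      simpa [Pi.add_def] using
        (differentiableOn_of_forall_hasSum_mul_pow_add_two ha).add differentiableOn_id
    differentiableOn_g := differentiableOn_of_forall_hasSum_mul_pow_add_two hb
    h_zero := by simpa using ((ha 0 (mem_ball_self one_pos)).unique (by simp))
    g_zero := (hb 0 (mem_ball_self one_pos)).unique (by simp)
    deriv_h_zero := hh.deriv
    deriv_g_zero := (hasDerivAt_zero_of_forall_hasSum_mul_pow_add_two hb).deriv
    neg_add_norm_lt_re := hre }

namespace HarmonicPH0

variable {M : ℝ} {h g : ℂ → ℂ} {ε u w z : ℂ}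

theorem differentiableOn_deriv_h (hf : HarmonicPH0 M h g) :
    DifferentiableOn ℂ (deriv h) (ball 0 1) :=
  hf.differentiableOn_h.deriv isOpen_ball

theorem differentiableOn_deriv_g (hf : HarmonicPH0 M h g) :
    DifferentiableOn ℂ (deriv g) (ball 0 1) :=
  hf.differentiableOn_g.deriv isOpen_ball

theorem hasDerivAt_h (hf : HarmonicPH0 M h g) (hu : u ∈ ball (0 : ℂ) 1) :
    HasDerivAt h (deriv h u) u :=
  hf.differentiableOn_h.hasDerivAt (isOpen_ball.mem_nhds hu)

theorem hasDerivAt_g (hf : HarmonicPH0 M h g) (hu : u ∈ ball (0 : ℂ) 1) :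
    HasDerivAt g (deriv g u) u :=
  hf.differentiableOn_g.hasDerivAt (isOpen_ball.mem_nhds hu)

theorem hasDerivAt_deriv_h (hf : HarmonicPH0 M h g) (hu : u ∈ ball (0 : ℂ) 1) :
    HasDerivAt (deriv h) (deriv (deriv h) u) u :=
  hf.differentiableOn_deriv_h.hasDerivAt (isOpen_ball.mem_nhds hu)

theorem hasDerivAt_deriv_g (hf : HarmonicPH0 M h g) (hu : u ∈ ball (0 : ℂ) 1) :
    HasDerivAt (deriv g) (deriv (deriv g) u) u :=
  hf.differentiableOn_deriv_g.hasDerivAt (isOpen_ball.mem_nhds hu)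

theorem neg_lt_re_mul_deriv_deriv_add (hf : HarmonicPH0 M h g) (hε : ‖ε‖ = 1)
    (hu : u ∈ ball (0 : ℂ) 1) :
    -M < (u * (deriv (deriv h) u + ε * deriv (deriv g) u)).re := by
  have h1 := neg_le_of_abs_le (Complex.abs_re_le_norm (ε * (u * deriv (deriv g) u)))
  rw [norm_mul, hε, one_mul] at h1
  rw [mul_add, mul_left_comm, Complex.add_re]
  linarith [hf.neg_add_norm_lt_re u hu]

theorem differentiableOn_mul_deriv_deriv_add (hf : HarmonicPH0 M h g) (ε : ℂ) :
    DifferentiableOn ℂ (fun u => u * (deriv (deriv h) u + ε * deriv (deriv g) u)) (ball 0 1) :=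
  differentiableOn_id.mul ((hf.differentiableOn_deriv_h.deriv isOpen_ball).add
    ((hf.differentiableOn_deriv_g.deriv isOpen_ball).const_mul ε))

theorem norm_deriv_add_mul_sub_one_le (hf : HarmonicPH0 M h g) (hε : ‖ε‖ = 1)
    (hw : w ∈ ball (0 : ℂ) 1) :
    ‖deriv h w + ε * deriv g w - 1‖ ≤ -(2 * M * Real.log (1 - ‖w‖)) := by
  have key := norm_sub_le_of_norm_mul_deriv_le
    (G := fun u => deriv h u + ε * deriv g u)
    (G' := fun u => deriv (deriv h) u + ε * deriv (deriv g) u)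
    (φ := fun s => -(2 * M * Real.log (1 - s))) (ψ := fun s => 2 * M * (1 - s)⁻¹)
    (fun u hu => (hf.hasDerivAt_deriv_h hu).add ((hf.hasDerivAt_deriv_g hu).const_mul ε))
    (fun s hs => ((Real.hasDerivAt_log_one_sub hs.2).const_mul (2 * M)).neg.congr_deriv
      (by ring))
    (fun u hu => ?_) hw
  · simpa [hf.deriv_h_zero, hf.deriv_g_zero] using key
  · convert norm_le_of_neg_lt_re (hf.differentiableOn_mul_deriv_deriv_add ε) (by simp)
      (fun v hv => hf.neg_lt_re_mul_deriv_deriv_add hε hv) hu using 1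
    ring

theorem norm_add_mul_sub_le (hf : HarmonicPH0 M h g) (hε : ‖ε‖ = 1) (hw : w ∈ ball (0 : ℂ) 1) :
    ‖h w + ε * g w - w‖ ≤ 2 * M * ((1 - ‖w‖) * Real.log (1 - ‖w‖) + ‖w‖) := by
  have key := norm_sub_le_of_norm_mul_deriv_le
    (G := fun u => h u + ε * g u - u) (G' := fun u => deriv h u + ε * deriv g u - 1)
    (φ := fun s => 2 * M * ((1 - s) * Real.log (1 - s) + s))
    (ψ := fun s => 2 * M * -Real.log (1 - s))
    (fun u hu => ((hf.hasDerivAt_h hu).add ((hf.hasDerivAt_g hu).const_mul ε)).sub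
      (hasDerivAt_id u))
    (fun s hs => (Real.hasDerivAt_one_sub_mul_log_one_sub_add hs.2).const_mul (2 * M))
    (fun u hu => ?_) hw
  · simpa [hf.h_zero, hf.g_zero] using key
  · rw [norm_mul, mul_neg]
    exact mul_le_mul_of_nonneg_left (hf.norm_deriv_add_mul_sub_one_le hε hu) (norm_nonneg u)

theorem norm_le (hf : HarmonicPH0 M h g) (hz : z ∈ ball (0 : ℂ) 1) :
    ‖h z + conj (g z)‖ ≤ ‖z‖ + 2 * M * ((1 - ‖z‖) * Real.log (1 - ‖z‖) + ‖z‖) := by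
  obtain ⟨ε, hε, hsum⟩ := Complex.exists_norm_eq_one_norm_add_mul_eq (h z - z) (g z)
  calc ‖h z + conj (g z)‖ = ‖z + (h z - z) + conj (g z)‖ := by ring_nf
    _ ≤ ‖z‖ + ‖h z - z‖ + ‖g z‖ := by
      simpa only [Complex.norm_conj] using norm_add₃_le (a := z) (b := h z - z) (c := conj (g z))
    _ = ‖z‖ + ‖h z + ε * g z - z‖ := by rw [add_sub_right_comm, hsum, add_assoc]
    _ ≤ _ := by linarith [hf.norm_add_mul_sub_le hε hz]

theorem one_sub_le_re_deriv_sub_norm_deriv (hf : HarmonicPH0 M h g) (hw : w ∈ ball (0 : ℂ) 1) :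
    1 - 2 * M * Real.log (1 + ‖w‖) ≤ (deriv h w).re - ‖deriv g w‖ := by
  obtain ⟨c, hc, hcg⟩ := Complex.exists_norm_eq_one_mul_eq_norm (deriv g w)
  have key := sub_le_re_sub_of_le_re_mul_deriv
    (G := fun u => deriv h u + -c * deriv g u)
    (G' := fun u => deriv (deriv h) u + -c * deriv (deriv g) u)
    (φ := fun s => -(2 * M * Real.log (1 + s))) (ψ := fun s => -(2 * M * (1 + s)⁻¹))
    (fun u hu => (hf.hasDerivAt_deriv_h hu).add ((hf.hasDerivAt_deriv_g hu).const_mul (-c)))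
    (fun s hs => ((Real.hasDerivAt_log_one_add (by linarith [hs.1])).const_mul (2 * M)).neg)
    (fun u hu => ?_) hw
  · rw [neg_mul, hcg] at key
    simp only [hf.deriv_h_zero, hf.deriv_g_zero, mul_zero, add_zero, sub_zero, Real.log_one,
      neg_zero, Complex.sub_re, Complex.add_re, Complex.neg_re, Complex.ofReal_re,
      Complex.one_re] at key
    linarith
  · convert neg_le_re_of_neg_lt_re (hf.differentiableOn_mul_deriv_deriv_add (-c)) (by simp)
      (fun v hv => hf.neg_lt_re_mul_deriv_deriv_add (by rwa [norm_neg]) hv) hu using 1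
    ring

theorem le_re_conj_mul (hf : HarmonicPH0 M h g) (hz : z ∈ ball (0 : ℂ) 1) :
    ‖z‖ * (‖z‖ - 2 * M * ((1 + ‖z‖) * Real.log (1 + ‖z‖) - ‖z‖))
      ≤ (conj z * (h z + conj (g z))).re := by
  set r := ‖z‖
  have hmem : ∀ t ∈ Icc (0 : ℝ) 1, (t : ℂ) * z ∈ ball (0 : ℂ) 1 :=
    fun t ht => ofReal_mul_mem_ball ht hz
  have key := sub_le_re_sub_of_le_re_deriv zero_le_one
    (γ := fun t : ℝ => conj z * h (t * z) + z * g (t * z))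
    (γ' := fun t => conj z * (deriv h (t * z) * z) + z * (deriv g (t * z) * z))
    (B := fun t => r * (t * r - 2 * M * ((1 + t * r) * Real.log (1 + t * r) - t * r)))
    (B' := fun t => r * (r - 2 * M * (Real.log (1 + t * r) * r)))
    (fun t ht => ((hf.hasDerivAt_h (hmem t ht)).comp_ofReal_mul.const_mul _).add
      ((hf.hasDerivAt_g (hmem t ht)).comp_ofReal_mul.const_mul _))
    (fun t ht => (((hasDerivAt_mul_const r).sub (((Real.hasDerivAt_one_add_mul_log_one_add_sub
      (by nlinarith [ht.1, norm_nonneg z] : -1 < t * r)).comp t (hasDerivAt_mul_const r)).const_mul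
      (2 * M))).const_mul r).congr_deriv (by ring))
    (fun t ht => ?_)
  · have e : (conj z * (h z + conj (g z))).re = (conj z * h z + z * g z).re := by
      simp [mul_add, ← map_mul]
    rw [e]
    simpa [hf.h_zero, hf.g_zero] using key
  · have hu := hmem t (Ioo_subset_Icc_self ht)
    have hd := hf.one_sub_le_re_deriv_sub_norm_deriv hu
    rw [norm_mul, Complex.norm_real, Real.norm_of_nonneg ht.1.le] at hd
    have hh : (conj z * (deriv h (t * z) * z)).re = r ^ 2 * (deriv h (t * z)).re := by
      rw [mul_left_comm, Complex.conj_mul', ← Complex.ofReal_pow, Complex.re_mul_ofReal, mul_comm]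
    have hg := neg_le_of_abs_le (Complex.abs_re_le_norm (z * (deriv g (t * z) * z)))
    rw [norm_mul, norm_mul] at hg
    rw [Complex.add_re, hh]
    linarith [mul_le_mul_of_nonneg_left hd (sq_nonneg r)]

theorem sub_le_norm (hf : HarmonicPH0 M h g) (hz : z ∈ ball (0 : ℂ) 1) :
    ‖z‖ - 2 * M * ((1 + ‖z‖) * Real.log (1 + ‖z‖) - ‖z‖) ≤ ‖h z + conj (g z)‖ := by
  rcases (norm_nonneg z).eq_or_lt with hr | hr
  · simp [← hr]
  refine le_of_mul_le_mul_left ?_ hr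
  calc _ ≤ (conj z * (h z + conj (g z))).re := hf.le_re_conj_mul hz
    _ ≤ ‖conj z * (h z + conj (g z))‖ := Complex.re_le_norm _
    _ = ‖z‖ * ‖h z + conj (g z)‖ := by rw [norm_mul, Complex.norm_conj]

end HarmonicPH0

theorem growth_estimate_general (M : ℝ) (a b : ℕ → ℂ) (h g : ℂ → ℂ)
    (hf : PH0 M a b h g) (z : ℂ) (hz : z ∈ Metric.ball (0 : ℂ) 1) :
    ‖z‖ + 2 * M * ∑' n : ℕ,
        (-1 : ℝ) ^ (n + 1) * (‖z‖) ^ (n + 2) / (((n : ℝ) + 2) * ((n : ℝ) + 1))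
      ≤ ‖h z + (starRingEnd ℂ) (g z)‖ ∧
    ‖h z + (starRingEnd ℂ) (g z)‖
      ≤ ‖z‖ + 2 * M * ∑' n : ℕ,
          (‖z‖) ^ (n + 2) / (((n : ℝ) + 2) * ((n : ℝ) + 1)) := by
  have hf := hf.harmonicPH0
  have hr : |‖z‖| < 1 := by simpa using hz
  rw [(hasSum_neg_one_pow_mul_pow_div_mul_of_abs_lt_one hr).tsum_eq,
    (hasSum_pow_div_mul_of_abs_lt_one hr).tsum_eq]
  exact ⟨by linarith [hf.sub_le_norm hz], by linarith [hf.norm_le hz]⟩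

/-- Growth theorem for the class `P⁰_H(M)`. -/
theorem growth_estimate (M : ℝ) (hM : 0 < M) (a b : ℕ → ℂ) (h g : ℂ → ℂ)
    (hf : PH0 M a b h g) (z : ℂ) (hz : z ∈ Metric.ball (0 : ℂ) 1) :
    ‖z‖ + 2 * M * ∑' n : ℕ,
        (-1 : ℝ) ^ (n + 1) * (‖z‖) ^ (n + 2) / (((n : ℝ) + 2) * ((n : ℝ) + 1))
      ≤ ‖h z + (starRingEnd ℂ) (g z)‖ ∧
    ‖h z + (starRingEnd ℂ) (g z)‖
      ≤ ‖z‖ + 2 * M * ∑' n : ℕ,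
          (‖z‖) ^ (n + 2) / (((n : ℝ) + 2) * ((n : ℝ) + 1)) :=
  growth_estimate_general M a b h g hf z hz
end

section
/- Let M > 0, let N ≥ 2 be an integer, and let r₀ ∈ (0,1) satisfy r₀ − 1 + 2M(2r₀ − 1 + 2(1−r₀)ln(1−r₀) − Σ_{n=2}^{N−1} r₀ⁿ/(n(n−1)) + 2 ln 2) = 0. Then for the function f_M(z) = z + 2M Σ_{n=2}^∞ zⁿ/(n(n−1)) (whose coefficients are a_n = 2M/(n(n−1)), b_n = 0), equality holds: |f_M(r₀)| + Σ_{n=N}^∞ (2M/(n(n−1))) r₀ⁿ = 1 + 2M(1 − 2 ln 2) = d(f_M(0), ∂f_M(𝔻)). -/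
/-!
In closed form `f_M z = z + 2M (z + (1 - z) log (1 - z))`, so `f_M' z = 1 - 2M log (1 - z)`.
Integrating `Re f_M'` along `[0, z]` and using `|1 - s z| ≤ 1 + s |z|` gives `|f_M z| ≥ Φ |z|`
with `Φ t = (1 + 2M) t - 2M (1 + t) log (1 + t)` (`fMLowerBound`), and `f_M (-t) = -Φ t` shows
that this is attained on the negative radius; hence the liminf is `Φ 1 = 1 + 2M (1 - 2 log 2)`.
At `r₀` all coefficients are non-negative, so `|f_M r₀|` plus the tail is the full series minus a
partial sum, which the equation for `r₀` turns into the same value.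
-/

open Filter Topology Set

/-- The extremal function `f_M z = z + 2M ∑_{n≥2} z^n/(n(n-1))`. -/
noncomputable def fM (M : ℝ) : ℂ → ℂ :=
  fun z => z + 2 * (M : ℂ) * ∑' n : ℕ, z ^ (n + 2) / (((n : ℂ) + 2) * ((n : ℂ) + 1))

theorem hasSum_pow_add_two_div_mul {z : ℂ} (hz : ‖z‖ < 1) :
    HasSum (fun n : ℕ => z ^ (n + 2) / (((n : ℂ) + 2) * ((n : ℂ) + 1)))
      (z + (1 - z) * Complex.log (1 - z)) := by
  have hlog := Complex.hasSum_taylorSeries_neg_log' hz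
  have hshift : HasSum (fun n : ℕ => z ^ (n + 2) / ((n : ℂ) + 2)) (-Complex.log (1 - z) - z) := by
    have h := (hasSum_nat_add_iff' 1).2 hlog
    push_cast at h
    simpa [add_assoc, one_add_one_eq_two] using h
  -- `1 / ((n + 2) (n + 1)) = 1 / (n + 1) - 1 / (n + 2)`
  have h := (hlog.mul_left z).sub hshift
  rw [show z * -Complex.log (1 - z) - (-Complex.log (1 - z) - z)
    = z + (1 - z) * Complex.log (1 - z) by ring] at h
  refine h.congr_fun fun n => ?_
  have h1 : (n : ℂ) + 1 ≠ 0 := Nat.cast_add_one_ne_zero n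
  have h2 : (n : ℂ) + 2 ≠ 0 := by exact_mod_cast Nat.succ_ne_zero (n + 1)
  field_simp
  ring

-- The terms `n = 0, 1` are `x ^ n / 0 = 0`.
theorem hasSum_pow_div_mul_sub_one {x : ℝ} (hx : |x| < 1) :
    HasSum (fun n : ℕ => x ^ n / ((n : ℝ) * ((n : ℝ) - 1)))
      (x + (1 - x) * Real.log (1 - x)) := by
  rw [← hasSum_nat_add_iff' 2, ← Complex.hasSum_ofReal]
  have hx1 : 0 ≤ 1 - x := by linarith [(abs_lt.mp hx).2]
  convert hasSum_pow_add_two_div_mul (z := x) (by rwa [Complex.norm_real, Real.norm_eq_abs])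
    using 1
  · funext n; push_cast; ring
  · simp [Finset.sum_range_succ, Complex.ofReal_log hx1]

theorem pow_div_mul_sub_one_nonneg {x : ℝ} (hx : 0 ≤ x) (k : ℕ) :
    0 ≤ x ^ k / ((k : ℝ) * ((k : ℝ) - 1)) := by
  rcases k with _ | k
  · simp
  · push_cast
    rw [add_sub_cancel_right]
    positivity

theorem hasSum_pow_add_div_mul_sub_one {x : ℝ} (hx : |x| < 1) (N : ℕ) :
    HasSum (fun n : ℕ => x ^ (n + N) / (((n : ℝ) + N) * ((n : ℝ) + N - 1)))
      (x + (1 - x) * Real.log (1 - x)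
        - ∑ n ∈ Finset.Icc 2 (N - 1), x ^ n / ((n : ℝ) * ((n : ℝ) - 1))) := by
  have hlow : ∑ n ∈ Finset.range N, x ^ n / ((n : ℝ) * ((n : ℝ) - 1))
      = ∑ n ∈ Finset.Icc 2 (N - 1), x ^ n / ((n : ℝ) * ((n : ℝ) - 1)) := by
    refine (Finset.sum_subset (fun n hn => ?_) fun n hn hn' => ?_).symm
    · simp only [Finset.mem_Icc, Finset.mem_range] at hn ⊢; omega
    · simp only [Finset.mem_Icc, Finset.mem_range] at hn hn'
      have : n < 2 := by omega
      interval_cases n <;> simp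
  rw [← hlow]
  exact_mod_cast (hasSum_nat_add_iff' N).2 (hasSum_pow_div_mul_sub_one hx)

theorem fM_eq_of_norm_lt_one {M : ℝ} {z : ℂ} (hz : ‖z‖ < 1) :
    fM M z = z + 2 * M * (z + (1 - z) * Complex.log (1 - z)) := by
  rw [fM, (hasSum_pow_add_two_div_mul hz).tsum_eq]

theorem fM_zero (M : ℝ) : fM M 0 = 0 := by
  simp [fM_eq_of_norm_lt_one (z := 0) (by simp)]

theorem fM_ofReal (M : ℝ) {x : ℝ} (hx : |x| < 1) :
    fM M x = ↑(x + 2 * M * (x + (1 - x) * Real.log (1 - x))) := by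
  have hx1 : 0 ≤ 1 - x := by linarith [(abs_lt.mp hx).2]
  rw [fM_eq_of_norm_lt_one (by rwa [Complex.norm_real, Real.norm_eq_abs])]
  push_cast [Complex.ofReal_log hx1]
  rfl

theorem hasDerivAt_fM (M : ℝ) {z : ℂ} (hz : ‖z‖ < 1) :
    HasDerivAt (fM M) (1 - 2 * M * Complex.log (1 - z)) z := by
  have hslit : 1 - z ∈ Complex.slitPlane := by
    refine Complex.mem_slitPlane_iff.2 (Or.inl ?_)
    simpa using (Complex.re_le_norm z).trans_lt hz
  have hsub : HasDerivAt (fun y : ℂ => 1 - y) (-1) z := (hasDerivAt_id z).const_sub 1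
  have hmul := hsub.mul ((Complex.hasDerivAt_log hslit).comp z hsub)
  have hclosed := (hasDerivAt_id z).add (((hasDerivAt_id z).add hmul).const_mul (2 * (M : ℂ)))
  refine (hclosed.congr_deriv ?_).congr_of_eventuallyEq ?_
  · simp only [Function.comp_apply]
    field_simp [Complex.slitPlane_ne_zero hslit]
    ring
  filter_upwards [Metric.isOpen_ball.mem_nhds (mem_ball_zero_iff.2 hz)] with y hy
  exact fM_eq_of_norm_lt_one (mem_ball_zero_iff.1 hy)

noncomputable def fMLowerBound (M t : ℝ) : ℝ :=
  (1 + 2 * M) * t - 2 * M * (1 + t) * Real.log (1 + t)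

theorem fM_neg_ofReal (M : ℝ) {t : ℝ} (ht : |t| < 1) : fM M (-t) = -(fMLowerBound M t : ℂ) := by
  rw [← Complex.ofReal_neg, fM_ofReal M (by rwa [abs_neg]), fMLowerBound]
  push_cast
  ring_nf

theorem hasDerivAt_fMLowerBound (M : ℝ) {t : ℝ} (ht : -1 < t) :
    HasDerivAt (fMLowerBound M) (1 - 2 * M * Real.log (1 + t)) t := by
  have hadd : HasDerivAt (fun s : ℝ => 1 + s) 1 t := (hasDerivAt_id t).const_add 1
  have h1t : 1 + t ≠ 0 := by linarith
  have hlog := hadd.mul (hadd.log h1t)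
  refine ((((hasDerivAt_id t).const_mul (1 + 2 * M)).sub
    (hlog.const_mul (2 * M))).congr_deriv ?_).congr_of_eventuallyEq (.of_forall fun s => ?_)
  · field_simp
    ring
  · simp only [fMLowerBound, Pi.sub_apply, Pi.mul_apply, id]
    ring

/-- Along the segment `[0, z]`, `Re (conj z * f)` grows at rate `‖z‖² Re f'`, which dominates the
rate `‖z‖² φ'` of `‖z‖ φ(s ‖z‖)`. -/
theorem sub_le_norm_sub_of_le_re_deriv {f f' : ℂ → ℂ} {φ φ' : ℝ → ℝ} {z : ℂ}
    (hf : ∀ s ∈ Icc (0 : ℝ) 1, HasDerivAt f (f' (s * z)) (s * z))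
    (hφ : ∀ s ∈ Icc (0 : ℝ) 1, HasDerivAt φ (φ' (s * ‖z‖)) (s * ‖z‖))
    (hle : ∀ s ∈ Icc (0 : ℝ) 1, φ' (s * ‖z‖) ≤ (f' (s * z)).re) :
    φ ‖z‖ - φ 0 ≤ ‖f z - f 0‖ := by
  rcases eq_or_ne z 0 with rfl | hz
  · simp
  set ψ : ℝ → ℝ := fun s => (starRingEnd ℂ z * f (s * z)).re - ‖z‖ * φ (s * ‖z‖)
  have hψ : ∀ s ∈ Icc (0 : ℝ) 1,
      HasDerivAt ψ (‖z‖ ^ 2 * ((f' (s * z)).re - φ' (s * ‖z‖))) s := by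
    intro s hs
    have hre := (((hf s hs).comp (s : ℂ) ((hasDerivAt_id _).mul_const z)).const_mul
      (starRingEnd ℂ z)).real_of_complex
    have hφs := ((hφ s hs).comp s ((hasDerivAt_id s).mul_const ‖z‖)).const_mul ‖z‖
    refine (hre.sub hφs).congr_deriv ?_
    rw [one_mul, one_mul, mul_comm (f' _), ← mul_assoc, Complex.conj_mul', ← Complex.ofReal_pow,
      Complex.re_ofReal_mul]
    ring
  have hmono : MonotoneOn ψ (Icc 0 1) :=
    monotoneOn_of_hasDerivWithinAt_nonneg (convex_Icc 0 1)
      (fun s hs => (hψ s hs).continuousAt.continuousWithinAt)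
      (fun s hs => (hψ s (interior_subset hs)).hasDerivWithinAt)
      (fun s hs => mul_nonneg (by positivity) (sub_nonneg.2 (hle s (interior_subset hs))))
  have hψ01 := hmono (left_mem_Icc.2 zero_le_one) (right_mem_Icc.2 zero_le_one) zero_le_one
  have hre_le : (starRingEnd ℂ z * (f z - f 0)).re ≤ ‖z‖ * ‖f z - f 0‖ := by
    simpa using Complex.re_le_norm (starRingEnd ℂ z * (f z - f 0))
  simp only [ψ, Complex.ofReal_zero, Complex.ofReal_one, zero_mul, one_mul] at hψ01
  rw [mul_sub, Complex.sub_re] at hre_le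
  have hz0 : 0 < ‖z‖ := norm_pos_iff.2 hz
  nlinarith

theorem one_sub_mul_log_one_add_norm_le_re {M : ℝ} (hM : 0 ≤ M) {w : ℂ} (hw : ‖w‖ < 1) :
    1 - 2 * M * Real.log (1 + ‖w‖) ≤ (1 - 2 * M * Complex.log (1 - w)).re := by
  have hpos : 0 < ‖1 - w‖ := norm_pos_iff.2 (sub_ne_zero.2 fun h => by simp [← h] at hw)
  have hle : ‖1 - w‖ ≤ 1 + ‖w‖ := (norm_sub_le _ _).trans_eq (by rw [norm_one])
  have hre : (1 - 2 * M * Complex.log (1 - w)).re = 1 - 2 * M * Real.log ‖1 - w‖ := by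
    simp [Complex.log_re]
  rw [hre]
  gcongr

theorem fMLowerBound_le_norm_fM {M : ℝ} (hM : 0 ≤ M) {z : ℂ} (hz : ‖z‖ < 1) :
    fMLowerBound M ‖z‖ ≤ ‖fM M z‖ := by
  have hsz : ∀ s ∈ Icc (0 : ℝ) 1, ‖(s : ℂ) * z‖ = s * ‖z‖ ∧ s * ‖z‖ < 1 := fun s hs => by
    rw [norm_mul, Complex.norm_real, Real.norm_of_nonneg hs.1]
    exact ⟨rfl, (mul_le_of_le_one_left (norm_nonneg z) hs.2).trans_lt hz⟩
  have h := sub_le_norm_sub_of_le_re_deriv (f := fM M) (φ := fMLowerBound M) (z := z)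
    (f' := fun w => 1 - 2 * M * Complex.log (1 - w)) (φ' := fun t => 1 - 2 * M * Real.log (1 + t))
    (fun s hs => hasDerivAt_fM M ((hsz s hs).1 ▸ (hsz s hs).2))
    (fun s hs => hasDerivAt_fMLowerBound M (t := s * ‖z‖)
      (by linarith [mul_nonneg hs.1 (norm_nonneg z)]))
    fun s hs => (hsz s hs).1 ▸ one_sub_mul_log_one_add_norm_le_re hM ((hsz s hs).1 ▸ (hsz s hs).2)
  simpa [fMLowerBound, fM_zero] using h

theorem bdyDist_eq_of_tendsto {f : ℂ → ℂ} {φ : ℝ → ℝ} {γ : ℝ → ℂ} {L : ℝ}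
    (hle : ∀ z : ℂ, ‖z‖ < 1 → φ ‖z‖ ≤ ‖f z - f 0‖) (hφ : Tendsto φ (𝓝[<] 1) (𝓝 L))
    (hγ : ∀ᶠ t in 𝓝[<] 1, ‖γ t‖ = t)
    (hfγ : Tendsto (fun t => ‖f (γ t) - f 0‖) (𝓝[<] 1) (𝓝 L)) :
    bdyDist f = L := by
  set F := comap (fun z : ℂ => ‖z‖) (𝓝[<] (1 : ℝ))
  have hγF : map γ (𝓝[<] 1) ≤ F :=
    tendsto_comap_iff.2 (tendsto_id.congr' (hγ.mono fun t ht => ht.symm))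
  have hu : Tendsto (fun z => ‖f z - f 0‖) (map γ (𝓝[<] 1)) (𝓝 L) := tendsto_map'_iff.2 hfγ
  have hbdd : F.IsBoundedUnder (· ≥ ·) (fun z => ‖f z - f 0‖) :=
    isBoundedUnder_of ⟨0, fun z => norm_nonneg _⟩
  have : F.NeBot := NeBot.mono inferInstance hγF
  have hφF : Tendsto (fun z : ℂ => φ ‖z‖) F (𝓝 L) := hφ.comp tendsto_comap
  refine le_antisymm ?_ ?_
  · exact (liminf_le_liminf_of_le hγF hbdd hu.isCoboundedUnder_ge).trans_eq hu.liminf_eq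
  · rw [← hφF.liminf_eq]
    refine liminf_le_liminf ?_ hφF.isBoundedUnder_ge (hu.isCoboundedUnder_ge.mono (map_mono hγF))
    filter_upwards [preimage_mem_comap self_mem_nhdsWithin] with z hz using hle z hz

theorem bdyDist_fM {M : ℝ} (hM : 0 ≤ M) (hL : 0 ≤ 1 + 2 * M * (1 - 2 * Real.log 2)) :
    bdyDist (fM M) = 1 + 2 * M * (1 - 2 * Real.log 2) := by
  have hφ : Tendsto (fMLowerBound M) (𝓝[<] 1) (𝓝 (1 + 2 * M * (1 - 2 * Real.log 2))) := by
    have h1 : fMLowerBound M 1 = 1 + 2 * M * (1 - 2 * Real.log 2) := by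
      norm_num [fMLowerBound]
      ring
    exact h1 ▸ (hasDerivAt_fMLowerBound M (by norm_num)).continuousAt.tendsto.mono_left
      nhdsWithin_le_nhds
  have hnear : ∀ᶠ t in 𝓝[<] (1 : ℝ), t ∈ Ioo 0 1 := Ioo_mem_nhdsLT zero_lt_one
  refine bdyDist_eq_of_tendsto (γ := fun t => -(t : ℂ))
    (fun z hz => by simpa [fM_zero] using fMLowerBound_le_norm_fM hM hz) hφ ?_ ?_
  · filter_upwards [hnear] with t ht
    simp [abs_of_pos ht.1]
  · refine (abs_of_nonneg hL ▸ hφ.abs).congr' ?_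
    filter_upwards [hnear] with t ht
    rw [fM_zero, sub_zero, fM_neg_ofReal M (abs_lt.2 ⟨by linarith [ht.1], ht.2⟩), norm_neg,
      Complex.norm_real, Real.norm_eq_abs]

theorem bohr_rogosinski_sharp_general (M : ℝ) (hM : 0 < M) (N : ℕ)
    (r₀ : ℝ) (hr₀ : r₀ ∈ Set.Ioo (0 : ℝ) 1)
    (hroot : r₀ - 1 + 2 * M * (2 * r₀ - 1 + 2 * (1 - r₀) * Real.log (1 - r₀)
      - ∑ n ∈ Finset.Icc 2 (N - 1), r₀ ^ n / ((n : ℝ) * ((n : ℝ) - 1)) + 2 * Real.log 2) = 0) :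
    (‖fM M (r₀ : ℂ)‖
        + ∑' n : ℕ, (2 * M / (((n : ℝ) + N) * ((n : ℝ) + N - 1))) * r₀ ^ (n + N)
      = 1 + 2 * M * (1 - 2 * Real.log 2)) ∧
    bdyDist (fM M) = 1 + 2 * M * (1 - 2 * Real.log 2) := by
  obtain ⟨hr0, hr1⟩ := hr₀
  have habs : |r₀| < 1 := abs_lt.2 ⟨by linarith, hr1⟩
  have hsum_nonneg : 0 ≤ r₀ + (1 - r₀) * Real.log (1 - r₀) :=
    (hasSum_pow_div_mul_sub_one habs).nonneg (pow_div_mul_sub_one_nonneg hr0.le)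
  have hnorm : ‖fM M (r₀ : ℂ)‖ = r₀ + 2 * M * (r₀ + (1 - r₀) * Real.log (1 - r₀)) := by
    rw [fM_ofReal M habs, Complex.norm_real, Real.norm_of_nonneg (by positivity)]
  have htail : HasSum (fun n : ℕ => (2 * M / (((n : ℝ) + N) * ((n : ℝ) + N - 1))) * r₀ ^ (n + N))
      (2 * M * (r₀ + (1 - r₀) * Real.log (1 - r₀)
        - ∑ n ∈ Finset.Icc 2 (N - 1), r₀ ^ n / ((n : ℝ) * ((n : ℝ) - 1)))) :=
    ((hasSum_pow_add_div_mul_sub_one habs N).mul_left (2 * M)).congr_fun fun n => by ring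
  have htail_nonneg :
      0 ≤ ∑' n : ℕ, (2 * M / (((n : ℝ) + N) * ((n : ℝ) + N - 1))) * r₀ ^ (n + N) :=
    tsum_nonneg fun n => by
      rw [div_mul_eq_mul_div, mul_div_assoc]
      exact mul_nonneg (by positivity)
        (by exact_mod_cast pow_div_mul_sub_one_nonneg hr0.le (n + N))
  have hvalue : ‖fM M (r₀ : ℂ)‖
      + ∑' n : ℕ, (2 * M / (((n : ℝ) + N) * ((n : ℝ) + N - 1))) * r₀ ^ (n + N)
      = 1 + 2 * M * (1 - 2 * Real.log 2) := by
    rw [hnorm, htail.tsum_eq]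
    linear_combination hroot
  exact ⟨hvalue, bdyDist_fM hM.le (hvalue ▸ add_nonneg (norm_nonneg _) htail_nonneg)⟩

/-- Sharpness of the Bohr–Rogosinski radius: equality for the extremal function `f_M`. -/
theorem bohr_rogosinski_sharp (M : ℝ) (hM : 0 < M) (N : ℕ) (hN : 2 ≤ N)
    (r₀ : ℝ) (hr₀ : r₀ ∈ Set.Ioo (0 : ℝ) 1)
    (hroot : r₀ - 1 + 2 * M * (2 * r₀ - 1 + 2 * (1 - r₀) * Real.log (1 - r₀)
      - ∑ n ∈ Finset.Icc 2 (N - 1), r₀ ^ n / ((n : ℝ) * ((n : ℝ) - 1)) + 2 * Real.log 2) = 0) :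
    (‖fM M (r₀ : ℂ)‖
        + ∑' n : ℕ, (2 * M / (((n : ℝ) + N) * ((n : ℝ) + N - 1))) * r₀ ^ (n + N)
      = 1 + 2 * M * (1 - 2 * Real.log 2)) ∧
    bdyDist (fM M) = 1 + 2 * M * (1 - 2 * Real.log 2) :=
  bohr_rogosinski_sharp_general M hM N r₀ hr₀ hroot
end
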